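/- There exists a natural number n0 such that for all integers n ≥ n0 with k ≤ n the following holds: if p_1 ≥ p_2 ≥ … ≥ p_k and h·p_1 > 324·log n, then Pr(W_{1,2,strict}) ≥ (1/36)·(p_1 + p_2). -/

import Mathlib

open scoped BigOperators

noncomputable section

/-- The number of the `h` i.i.d. samples `ω` that are equal to opinion `i`. -/
def cnt {k h : ℕ} (ω : Fin h → Fin k) (i : Fin k) : ℕ :=
  (Finset.univ.filter fun j => ω j = i).card

/-- The probability of the event `A` under `h` i.i.d. samples drawn from the
probability vector `p` on `Fin k` (multinomial sampling). -/
def multiPr (k h : ℕ) (p : Fin k → ℝ) (A : Set (Fin h → Fin k)) : ℝ :=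
  ∑ ω : Fin h → Fin k, A.indicator (fun ω => ∏ j, p (ω j)) ω

/-- The maximal number of samples received by an opinion. -/
def maxCnt {k h : ℕ} (ω : Fin h → Fin k) : ℕ :=
  Finset.univ.sup (cnt ω)

/-- The number of opinions achieving the maximal number of samples. -/
def numMax {k h : ℕ} (ω : Fin h → Fin k) : ℕ :=
  (Finset.univ.filter fun i => cnt ω i = maxCnt ω).card

/-- The probability that opinion `i` wins the `h`-majority with uniform
tie-breaking, jointly with the event `A`:
`E[ 1_A · 1{X_i = max_l X_l} / #{l : X_l maximal} ]`. -/
def winPrOn (k h : ℕ) (p : Fin k → ℝ) (A : Set (Fin h → Fin k)) (i : Fin k) : ℝ :=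
  ∑ ω : Fin h → Fin k,
    (A ∩ {ω' | cnt ω' i = maxCnt ω'}).indicator
      (fun ω => (∏ j, p (ω j)) / (numMax ω : ℝ)) ω

/-- The probability that opinion `i` wins the `h`-majority with uniform tie-breaking. -/
def winPr (k h : ℕ) (p : Fin k → ℝ) (i : Fin k) : ℝ :=
  winPrOn k h p Set.univ i

/-- `W_{i,strict}`: opinion `i` is the unique most sampled opinion. -/
def Wstrict (k h : ℕ) (i : Fin k) : Set (Fin h → Fin k) :=
  {ω | ∀ j, j ≠ i → cnt ω j < cnt ω i}

/-- `W_{i,ties}`: opinion `i` is among the most sampled opinions. -/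
def Wties (k h : ℕ) (i : Fin k) : Set (Fin h → Fin k) :=
  {ω | ∀ j, j ≠ i → cnt ω j ≤ cnt ω i}

/-- `W_{1,2,strict}`: opinion `i₁` or opinion `i₂` is the unique most sampled opinion. -/
def W12strict (k h : ℕ) (i₁ i₂ : Fin k) : Set (Fin h → Fin k) :=
  Wstrict k h i₁ ∪ Wstrict k h i₂

/-- Opinion 1 (as an element of `Fin k`, assuming `2 ≤ k`). -/
def o₁ (k : ℕ) (hk : 2 ≤ k) : Fin k := ⟨0, by omega⟩

/-- Opinion 2 (as an element of `Fin k`, assuming `2 ≤ k`). -/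
def o₂ (k : ℕ) (hk : 2 ≤ k) : Fin k := ⟨1, by omega⟩

/-!
Let `i` be the most likely opinion and `X = h p_i`. Call an opinion `l` light if `2 p_l ≤ p_i` and
heavy otherwise; there are at most `2 / p_i` heavy opinions. By Chernoff bounds (each of size
`exp (-X / 72) ≤ n⁻⁴`), with probability at least `3/4` opinion `i` gets more than `a = ⌊3X/4⌋`
samples while every light opinion gets at most `a`. If `p_i ≥ 2/3`, every other opinion is light
and this is already a strict win of `i`.

Otherwise some heavy opinion leads among the heavy ones, and relabelling it as `i` does not
decrease the weight of an outcome, so `i` leads the heavy opinions with probability at least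
`(p_i / 2) (3/4)`. Finally, moving one sample to `i` turns "`i` ties for the lead with `s`
samples" into "`i` leads strictly with `s + 1`" at the cost of the factor
`(s + 1)(1 - p_i) / ((h - s) p_i) ≤ 3`, valid for `s ≤ 5X/4`; and `X_i > 5X/4` has probability
at most `p_i / 8`.
-/

namespace StrictWin

open Finset Real

variable {k h : ℕ} {p : Fin k → ℝ}

lemma multiPr_nonneg (hp : ∀ j, 0 ≤ p j) (A : Set (Fin h → Fin k)) : 0 ≤ multiPr k h p A :=
  sum_nonneg fun _ _ => Set.indicator_nonneg (fun _ _ => prod_nonneg fun _ _ => hp _) _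

lemma multiPr_mono (hp : ∀ j, 0 ≤ p j) {A B : Set (Fin h → Fin k)} (hAB : A ⊆ B) :
    multiPr k h p A ≤ multiPr k h p B :=
  sum_le_sum fun _ _ =>
    Set.indicator_le_indicator_apply_of_subset hAB (prod_nonneg fun _ _ => hp _)

lemma multiPr_union_le (hp : ∀ j, 0 ≤ p j) (A B : Set (Fin h → Fin k)) :
    multiPr k h p (A ∪ B) ≤ multiPr k h p A + multiPr k h p B := by
  rw [multiPr, multiPr, multiPr, ← sum_add_distrib]
  refine sum_le_sum fun ω _ => ?_
  rw [← Set.indicator_union_add_inter_apply]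
  exact le_add_of_nonneg_right (Set.indicator_nonneg (fun _ _ => prod_nonneg fun _ _ => hp _) _)

lemma multiPr_biUnion_le (hp : ∀ j, 0 ≤ p j) {ι : Type*} (s : Finset ι)
    (A : ι → Set (Fin h → Fin k)) :
    multiPr k h p (⋃ j ∈ s, A j) ≤ ∑ j ∈ s, multiPr k h p (A j) := by
  classical
  induction s using Finset.induction_on with
  | empty => simp [multiPr]
  | insert j s hj ih =>
    rw [set_biUnion_insert, sum_insert hj]
    exact (multiPr_union_le hp _ _).trans (add_le_add le_rfl ih)

lemma multiPr_biUnion {ι : Type*} (s : Finset ι) (A : ι → Set (Fin h → Fin k))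
    (hA : (s : Set ι).PairwiseDisjoint A) :
    multiPr k h p (⋃ j ∈ s, A j) = ∑ j ∈ s, multiPr k h p (A j) := by
  simp only [multiPr, indicator_biUnion_apply s A hA]
  exact sum_comm

lemma multiPr_compl (hsum : ∑ j, p j = 1) (A : Set (Fin h → Fin k)) :
    multiPr k h p Aᶜ = 1 - multiPr k h p A := by
  have huniv : ∑ ω : Fin h → Fin k, ∏ l, p (ω l) = 1 := by
    rw [← Fintype.prod_sum (fun _ : Fin h => p), hsum, prod_const_one]
  rw [eq_sub_iff_add_eq, multiPr, multiPr, ← sum_add_distrib, ← huniv]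
  exact sum_congr rfl fun ω _ => Set.indicator_compl_add_self_apply A _ ω

lemma apply_le_one (hp : ∀ j, 0 ≤ p j) (hsum : ∑ j, p j = 1) (j : Fin k) : p j ≤ 1 :=
  hsum ▸ single_le_sum (fun l _ => hp l) (mem_univ j)

lemma cnt_cons {n : ℕ} (j : Fin k) (ω : Fin n → Fin k) :
    cnt (Fin.cons j ω : Fin (n + 1) → Fin k) = cnt ω + Pi.single j 1 := by
  funext i
  simp only [cnt, card_filter, Fin.sum_univ_succ, Fin.cons_zero, Fin.cons_succ, Pi.add_apply,
    Pi.single_apply]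
  rw [add_comm]
  exact congrArg _ (if_congr eq_comm rfl rfl)

/-- `E[f X]` for the counts `X` of `n` samples with weights `p`, without normalisation: it is also
applied to the defective weights `Function.update p i 0`. -/
def cntExp (p : Fin k → ℝ) (n : ℕ) (f : (Fin k → ℕ) → ℝ) : ℝ :=
  ∑ ω : Fin n → Fin k, (∏ l, p (ω l)) * f (cnt ω)

lemma multiPr_preimage_cnt (p : Fin k → ℝ) (E : Set (Fin k → ℕ)) :
    multiPr k h p (cnt ⁻¹' E) = cntExp p h (E.indicator 1) := by
  refine sum_congr rfl fun ω _ => ?_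
  by_cases hω : cnt ω ∈ E <;> simp [hω]

lemma cntExp_zero (f : (Fin k → ℕ) → ℝ) : cntExp p 0 f = f 0 := by
  rw [cntExp, Fintype.sum_unique, Fin.prod_univ_zero, one_mul]
  exact congrArg f (funext fun j => by simp [cnt])

lemma cntExp_succ (n : ℕ) (f : (Fin k → ℕ) → ℝ) :
    cntExp p (n + 1) f = ∑ j, p j * cntExp p n (fun c => f (c + Pi.single j 1)) := by
  rw [cntExp, ← (Fin.consEquiv fun _ : Fin (n + 1) => Fin k).sum_comp, Fintype.sum_prod_type]
  refine sum_congr rfl fun j _ => ?_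
  rw [cntExp, mul_sum]
  refine sum_congr rfl fun ω _ => ?_
  rw [show (Fin.consEquiv fun _ => Fin k) (j, ω) = Fin.cons j ω from rfl, cnt_cons,
    Fin.prod_univ_succ]
  simp only [Fin.cons_zero, Fin.cons_succ]
  ring

lemma cntExp_mono (hp : ∀ j, 0 ≤ p j) {n : ℕ} {f g : (Fin k → ℕ) → ℝ} (hfg : ∀ c, f c ≤ g c) :
    cntExp p n f ≤ cntExp p n g :=
  sum_le_sum fun _ _ => mul_le_mul_of_nonneg_left (hfg _) (prod_nonneg fun _ _ => hp _)

lemma cntExp_const_mul (n : ℕ) (a : ℝ) (f : (Fin k → ℕ) → ℝ) :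
    cntExp p n (fun c => a * f c) = a * cntExp p n f := by
  rw [cntExp, cntExp, mul_sum]
  exact sum_congr rfl fun _ _ => by ring

lemma cntExp_pow_cnt (j : Fin k) (x : ℝ) (n : ℕ) :
    cntExp p n (fun c => x ^ c j) = (∑ l, p l + p j * (x - 1)) ^ n := by
  induction n with
  | zero => simp [cntExp_zero]
  | succ n ih =>
    have hstep : ∀ l, p l * cntExp p n (fun c => x ^ (c + Pi.single l 1 : Fin k → ℕ) j)
        = (p l + if j = l then p j * (x - 1) else 0) * cntExp p n (fun c => x ^ c j) := by
      intro l
      by_cases hjl : j = l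
      · subst hjl
        rw [if_pos rfl, show p j + p j * (x - 1) = p j * x by ring, mul_assoc, ←
          cntExp_const_mul n x]
        congr 2
        funext c
        simp [pow_succ, mul_comm]
      · rw [if_neg hjl, add_zero]
        congr 2
        funext c
        simp [hjl]
    rw [cntExp_succ, sum_congr rfl fun l _ => hstep l, ← sum_mul, sum_add_distrib, sum_ite_eq,
      if_pos (mem_univ j), ih, pow_succ, mul_comm]

lemma multiPr_le_exp_of_pow_le (hp : ∀ j, 0 ≤ p j) (hsum : ∑ j, p j = 1) (j : Fin k)
    {a : ℕ} {x : ℝ} (hx : 0 < x) {E : Set (Fin k → ℕ)} (hE : ∀ c ∈ E, x ^ a ≤ x ^ c j) :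
    multiPr k h p (cnt ⁻¹' E) ≤ exp (h * p j * (x - 1) + a * (x⁻¹ - 1)) := by
  have hpj := apply_le_one hp hsum j
  have hmarkov : E.indicator 1 ≤ fun c => x⁻¹ ^ a * x ^ c j := by
    intro c
    by_cases hc : c ∈ E
    · rw [Set.indicator_of_mem hc, inv_pow, Pi.one_apply, one_le_inv_mul₀ (by positivity)]
      exact hE c hc
    · rw [Set.indicator_of_notMem hc]
      positivity
  calc multiPr k h p (cnt ⁻¹' E) = cntExp p h (E.indicator 1) := multiPr_preimage_cnt p E
    _ ≤ cntExp p h (fun c => x⁻¹ ^ a * x ^ c j) := cntExp_mono hp hmarkov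
    _ = x⁻¹ ^ a * (1 + p j * (x - 1)) ^ h := by rw [cntExp_const_mul, cntExp_pow_cnt, hsum]
    _ ≤ exp (x⁻¹ - 1) ^ a * exp (p j * (x - 1)) ^ h := by
      have hbase : 0 ≤ 1 + p j * (x - 1) := by nlinarith [hp j]
      gcongr
      · linarith [add_one_le_exp (x⁻¹ - 1)]
      · linarith [add_one_le_exp (p j * (x - 1))]
    _ = exp (h * p j * (x - 1) + a * (x⁻¹ - 1)) := by
      rw [← exp_nat_mul, ← exp_nat_mul, ← exp_add]
      ring_nf

lemma multiPr_cnt_le_le_exp (hp : ∀ j, 0 ≤ p j) (hsum : ∑ j, p j = 1) (j : Fin k) {a : ℕ}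
    (ha : (a : ℝ) ≤ 3 / 4 * (h * p j)) :
    multiPr k h p {ω | cnt ω j ≤ a} ≤ exp (-(h * p j) / 72) := by
  refine (multiPr_le_exp_of_pow_le hp hsum j (x := 7 / 8) (by norm_num) (E := {c | c j ≤ a})
    fun c hc => pow_le_pow_of_le_one (by norm_num) (by norm_num) hc).trans (exp_le_exp.2 ?_)
  have : 0 ≤ (h : ℝ) * p j := mul_nonneg h.cast_nonneg (hp j)
  norm_num
  linarith

lemma multiPr_le_cnt_le_exp_of_two_mul_le (hp : ∀ j, 0 ≤ p j) (hsum : ∑ j, p j = 1)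
    {i j : Fin k} (hij : 2 * p j ≤ p i) {a : ℕ} (ha : 3 / 4 * (h * p i) ≤ a) :
    multiPr k h p {ω | a ≤ cnt ω j} ≤ exp (-(h * p i) / 72) := by
  refine (multiPr_le_exp_of_pow_le hp hsum j (x := 6 / 5) (by norm_num) (E := {c | a ≤ c j})
    fun c hc => pow_le_pow_right₀ (by norm_num) hc).trans (exp_le_exp.2 ?_)
  have : 2 * ((h : ℝ) * p j) ≤ h * p i := by nlinarith [h.cast_nonneg (α := ℝ)]
  have : 0 ≤ (h : ℝ) * p j := mul_nonneg h.cast_nonneg (hp j)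
  norm_num
  linarith

lemma multiPr_le_cnt_le_exp (hp : ∀ j, 0 ≤ p j) (hsum : ∑ j, p j = 1) (j : Fin k) {a : ℕ}
    (ha : 5 / 4 * (h * p j) ≤ a) :
    multiPr k h p {ω | a ≤ cnt ω j} ≤ exp (-(h * p j) / 72) := by
  refine (multiPr_le_exp_of_pow_le hp hsum j (x := 9 / 8) (by norm_num) (E := {c | a ≤ c j})
    fun c hc => pow_le_pow_right₀ (by norm_num) hc).trans (exp_le_exp.2 ?_)
  norm_num
  linarith

lemma cntExp_indicator_cnt_eq {i : Fin k} {f : (Fin k → ℕ) → ℝ}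
    (hf : ∀ c, f (c + Pi.single i 1) = f c) (N t : ℕ) :
    cntExp p N ({c | c i = t}.indicator f)
      = N.choose t * p i ^ t * cntExp (Function.update p i 0) (N - t) f := by
  induction N generalizing t f with
  | zero => cases t <;> simp [cntExp_zero]
  | succ N ih =>
    set q := Function.update p i 0
    have hother : ∑ l ∈ {i}ᶜ, p l * cntExp p N (fun c => {c | c i = t}.indicator f
          (c + Pi.single l 1)) = N.choose t * p i ^ t * cntExp q (N - t + 1) f := by
      have hqi : q i = 0 := Function.update_self i 0 p
      rw [cntExp_succ, mul_sum, Fintype.sum_eq_add_sum_compl i, hqi, zero_mul, mul_zero, zero_add]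
      refine sum_congr rfl fun l hl => ?_
      have hli : l ≠ i := by simpa using hl
      have hshift : (fun c : Fin k → ℕ => {c | c i = t}.indicator f (c + Pi.single l 1))
          = {c | c i = t}.indicator fun c => f (c + Pi.single l 1) := by
        funext c
        simp [Set.indicator_apply, hli.symm]
      have hql : q l = p l := Function.update_of_ne hli 0 p
      rw [hshift, ih (fun c => by rw [add_right_comm, hf]), hql]
      ring
    have hself : cntExp p N (fun c => {c | c i = t}.indicator f (c + Pi.single i 1))
        = cntExp p N (fun c => if c i + 1 = t then f c else 0) := by
      congr 1
      funext c
      simp [Set.indicator_apply, hf]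
    rw [cntExp_succ, Fintype.sum_eq_add_sum_compl i, hother, hself]
    cases t with
    | zero => simp [cntExp]
    | succ t =>
      have hsucc : cntExp p N (fun c => if c i + 1 = t + 1 then f c else 0)
          = cntExp p N ({c | c i = t}.indicator f) := by
        congr 1
        funext c
        simp [Set.indicator_apply]
      have hlast : (N.choose (t + 1) : ℝ) * cntExp q (N - (t + 1) + 1) f
          = N.choose (t + 1) * cntExp q (N - t) f := by
        rcases lt_or_ge t N with htN | htN
        · rw [show N - (t + 1) + 1 = N - t by omega]
        · rw [Nat.choose_eq_zero_of_lt (by omega), Nat.cast_zero, zero_mul, zero_mul]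
      rw [hsucc, ih hf, Nat.succ_sub_succ, Nat.choose_succ_succ', Nat.cast_add, pow_succ]
      linear_combination p i ^ t * p i * hlast

lemma multiPr_cnt_eq_inter {i : Fin k} {E : Set (Fin k → ℕ)}
    (hE : ∀ c, c + Pi.single i 1 ∈ E ↔ c ∈ E) (t : ℕ) :
    multiPr k h p (cnt ⁻¹' ({c | c i = t} ∩ E))
      = h.choose t * p i ^ t * multiPr k (h - t) (Function.update p i 0) (cnt ⁻¹' E) := by
  rw [multiPr_preimage_cnt, multiPr_preimage_cnt, ← Set.indicator_indicator]
  refine cntExp_indicator_cnt_eq (f := E.indicator 1) (fun c => ?_) h t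
  by_cases hc : c ∈ E
  · rw [Set.indicator_of_mem hc, Set.indicator_of_mem ((hE c).2 hc)]
    rfl
  · rw [Set.indicator_of_notMem hc, Set.indicator_of_notMem (mt (hE c).1 hc)]

lemma multiPr_succ_le_of_isLowerSet (hp : ∀ j, 0 ≤ p j) {E : Set (Fin k → ℕ)}
    (hE : IsLowerSet E) (n : ℕ) :
    multiPr k (n + 1) p (cnt ⁻¹' E) ≤ (∑ j, p j) * multiPr k n p (cnt ⁻¹' E) := by
  rw [multiPr_preimage_cnt, multiPr_preimage_cnt, cntExp_succ, sum_mul]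
  refine sum_le_sum fun j _ => mul_le_mul_of_nonneg_left (cntExp_mono hp fun c => ?_) (hp j)
  by_cases hc : c + Pi.single j 1 ∈ E
  · rw [Set.indicator_of_mem hc,
      Set.indicator_of_mem (hE (le_add_of_nonneg_right fun _ => Nat.zero_le _) hc)]
    exact le_rfl
  · rw [Set.indicator_of_notMem hc]
    exact Set.indicator_nonneg (fun _ _ => zero_le_one) c

lemma sum_update_zero (p : Fin k → ℝ) (i : Fin k) :
    ∑ j, Function.update p i 0 j = ∑ j, p j - p i := by
  rw [sum_update_of_mem (mem_univ i), zero_add, sdiff_singleton_eq_erase, sum_erase_eq_sub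
    (mem_univ i)]

/-- Given `X_i = s`, the other counts are distributed with the defective weights
`Function.update p i 0`; trading one of their `h - s` samples for a sample of `i` stays in the lower
set `E` and changes the binomial factor by `(h - s) p_i / ((s + 1)(1 - p_i))`. -/
lemma sub_mul_multiPr_cnt_eq_le (hp : ∀ j, 0 ≤ p j) (hsum : ∑ j, p j = 1) {i : Fin k}
    {E : Set (Fin k → ℕ)} (hinv : ∀ c, c + Pi.single i 1 ∈ E ↔ c ∈ E) (hE : IsLowerSet E)
    (s : ℕ) :
    ((h - s : ℕ) : ℝ) * p i * multiPr k h p (cnt ⁻¹' ({c | c i = s} ∩ E))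
      ≤ (s + 1) * (1 - p i) * multiPr k h p (cnt ⁻¹' ({c | c i = s + 1} ∩ E)) := by
  have hq : ∀ j, 0 ≤ Function.update p i 0 j := fun j => by
    by_cases hj : j = i
    · simp [hj]
    · simp [hj, hp j]
  have hpi := apply_le_one hp hsum i
  have hpow : 0 ≤ p i ^ (s + 1) := pow_nonneg (hp i) _
  rw [multiPr_cnt_eq_inter hinv, multiPr_cnt_eq_inter hinv]
  rcases le_or_gt h s with hhs | hsh
  · rw [Nat.sub_eq_zero_of_le hhs, Nat.cast_zero, zero_mul, zero_mul]
    have hP := multiPr_nonneg hq (h := h - (s + 1)) (cnt ⁻¹' E)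
    have hpi' : 0 ≤ 1 - p i := by linarith
    exact mul_nonneg (mul_nonneg (by positivity) hpi')
      (mul_nonneg (mul_nonneg (by positivity) hpow) hP)
  · obtain ⟨m, rfl⟩ : ∃ m, h = s + 1 + m := ⟨h - (s + 1), by omega⟩
    have hdown := multiPr_succ_le_of_isLowerSet hq hE m
    rw [sum_update_zero, hsum] at hdown
    have hchoose : ((s + 1 + m).choose (s + 1) : ℝ) * (s + 1) = (s + 1 + m).choose s * (m + 1) := by
      exact_mod_cast (Nat.choose_succ_right_eq (s + 1 + m) s).trans (by congr 1; omega)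
    rw [show s + 1 + m - s = m + 1 by omega, show s + 1 + m - (s + 1) = m by omega]
    calc ((m + 1 : ℕ) : ℝ) * p i * ((s + 1 + m).choose s * p i ^ s
            * multiPr k (m + 1) (Function.update p i 0) (cnt ⁻¹' E))
        = ((m + 1) * (s + 1 + m).choose s * p i ^ (s + 1))
            * multiPr k (m + 1) (Function.update p i 0) (cnt ⁻¹' E) := by
          push_cast; ring
      _ ≤ ((m + 1) * (s + 1 + m).choose s * p i ^ (s + 1))
            * ((1 - p i) * multiPr k m (Function.update p i 0) (cnt ⁻¹' E)) :=
          mul_le_mul_of_nonneg_left hdown (by positivity)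
      _ = _ := by
          linear_combination (-(1 - p i) * p i ^ (s + 1)
            * multiPr k m (Function.update p i 0) (cnt ⁻¹' E)) * hchoose

lemma prod_apply_eq_prod_pow_cnt {n : ℕ} (p : Fin k → ℝ) (ω : Fin n → Fin k) :
    ∏ l, p (ω l) = ∏ j, p j ^ cnt ω j := by
  rw [← prod_fiberwise_of_maps_to (g := ω) (fun l _ => mem_univ (ω l))]
  refine prod_congr rfl fun j _ => ?_
  rw [prod_congr rfl fun l hl => congrArg p (mem_filter.1 hl).2, prod_const]
  rfl

lemma cnt_perm_comp {n : ℕ} (σ : Equiv.Perm (Fin k)) (ω : Fin n → Fin k) :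
    cnt (σ ∘ ω) = cnt ω ∘ σ.symm := by
  funext j
  simp [cnt, Equiv.eq_symm_apply]

lemma pow_mul_pow_le_of_le {a b : ℝ} (hb : 0 ≤ b) (hba : b ≤ a) {m n : ℕ} (hmn : m ≤ n) :
    a ^ m * b ^ n ≤ a ^ n * b ^ m := by
  obtain ⟨d, rfl⟩ := Nat.exists_eq_add_of_le hmn
  have hab : 0 ≤ a ^ m * b ^ m := mul_nonneg (pow_nonneg (hb.trans hba) m) (pow_nonneg hb m)
  calc a ^ m * b ^ (m + d) = a ^ m * b ^ m * b ^ d := by ring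
    _ ≤ a ^ m * b ^ m * a ^ d := mul_le_mul_of_nonneg_left (pow_le_pow_left₀ hb hba d) hab
    _ = a ^ (m + d) * b ^ m := by ring

lemma prod_pow_swap_le (hp : ∀ j, 0 ≤ p j) {i j : Fin k} (hpij : p j ≤ p i) {c : Fin k → ℕ}
    (hc : c j ≤ c i) : ∏ l, p l ^ c (Equiv.swap i j l) ≤ ∏ l, p l ^ c l := by
  classical
  rcases eq_or_ne i j with rfl | hij
  · simp
  rw [← prod_mul_prod_compl {i, j}, ← prod_mul_prod_compl {i, j} (fun l => p l ^ c l),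
    prod_pair hij, prod_pair hij, Equiv.swap_apply_left, Equiv.swap_apply_right]
  have hrest : ∏ l ∈ ({i, j} : Finset (Fin k))ᶜ, p l ^ c (Equiv.swap i j l)
      = ∏ l ∈ ({i, j} : Finset (Fin k))ᶜ, p l ^ c l :=
    prod_congr rfl fun l hl => by
      simp only [mem_compl, mem_insert, mem_singleton, not_or] at hl
      rw [Equiv.swap_apply_of_ne_of_ne hl.1 hl.2]
  rw [hrest]
  exact mul_le_mul_of_nonneg_right (pow_mul_pow_le_of_le (hp j) hpij hc)
    (prod_nonneg fun l _ => pow_nonneg (hp l) _)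

/-- Relabelling `i ↔ j` maps every outcome in `E` to one of at least the same weight, since on `E`
the more likely opinion `i` has at most as many samples as `j`. -/
lemma multiPr_le_multiPr_swap (hp : ∀ j, 0 ≤ p j) {i j : Fin k} (hpij : p j ≤ p i)
    {E : Set (Fin k → ℕ)} (hE : ∀ c ∈ E, c i ≤ c j) :
    multiPr k h p (cnt ⁻¹' E) ≤ multiPr k h p (cnt ⁻¹' {c | c ∘ Equiv.swap i j ∈ E}) := by
  set σ := Equiv.swap i j
  rw [multiPr_preimage_cnt, multiPr_preimage_cnt, cntExp, cntExp,
    ← (Equiv.piCongrRight fun _ : Fin h => σ).sum_comp]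
  refine sum_le_sum fun ω _ => ?_
  have hcnt : cnt (fun l => σ (ω l)) = cnt ω ∘ σ := by
    rw [← Function.comp_def, cnt_perm_comp, Equiv.symm_swap]
  change (∏ l, p (σ (ω l))) * E.indicator 1 (cnt fun l => σ (ω l)) ≤ _
  rw [hcnt]
  by_cases hω : cnt ω ∘ σ ∈ E
  · rw [Set.indicator_of_mem hω, Set.indicator_of_mem (show cnt ω ∈ {c | c ∘ σ ∈ E} from hω),
      Pi.one_apply, Pi.one_apply, mul_one, mul_one, prod_apply_eq_prod_pow_cnt (fun l => p (σ l)),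
      prod_apply_eq_prod_pow_cnt, ← Equiv.prod_comp σ (fun l => p (σ l) ^ cnt ω l)]
    simp only [σ, Equiv.swap_apply_self]
    exact prod_pow_swap_le hp hpij (by simpa [σ] using hE _ hω)
  · rw [Set.indicator_of_notMem hω, mul_zero]
    exact mul_nonneg (prod_nonneg fun _ _ => hp _) (Set.indicator_nonneg (fun _ _ => zero_le_one) _)

lemma exp_neg_div_le_inv_pow {n : ℕ} (hn : 1 ≤ n) {X : ℝ} (hX : 324 * log n < X) :
    exp (-X / 72) ≤ ((n : ℝ) ^ 4)⁻¹ := by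
  have hlog : 0 ≤ log n := log_nonneg (by exact_mod_cast hn)
  rw [← exp_log (show (0 : ℝ) < n ^ 4 by positivity), ← exp_neg, log_pow]
  exact exp_le_exp.2 (by push_cast; linarith)

/-- Opinion `l` is light if `2 p l ≤ p i`: then it rarely gets `3/4` of the `h p i` samples
expected for `i`. -/
def lightLe (p : Fin k → ℝ) (i : Fin k) (a : ℕ) : Set (Fin k → ℕ) :=
  {c | ∀ l, 2 * p l ≤ p i → c l ≤ a}

def leadsHeavy (p : Fin k → ℝ) (i : Fin k) (a : ℕ) (j : Fin k) : Set (Fin k → ℕ) :=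
  {c | a < c j ∧ ∀ l, p i < 2 * p l → c l ≤ c j} ∩ lightLe p i a

def heavyLe (p : Fin k → ℝ) (i : Fin k) (a s : ℕ) : Set (Fin k → ℕ) :=
  {c | ∀ l, l ≠ i → p i < 2 * p l → c l ≤ s} ∩ lightLe p i a

lemma three_quarters_le_multiPr_lightLe (hp : ∀ j, 0 ≤ p j) (hsum : ∑ j, p j = 1) (i : Fin k)
    {n : ℕ} (hkn : k ≤ n) (hn : 2 ≤ n) (hX : 324 * log n < h * p i) {a : ℕ}
    (ha : (a : ℝ) ≤ 3 / 4 * (h * p i)) (ha' : 3 / 4 * (h * p i) ≤ a + 1) :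
    3 / 4 ≤ multiPr k h p (cnt ⁻¹' ({c | a < c i} ∩ lightLe p i a)) := by
  classical
  set ε := exp (-(h * p i) / 72)
  have hcover : (cnt ⁻¹' ({c | a < c i} ∩ lightLe p i a) : Set (Fin h → Fin k))ᶜ
      ⊆ {ω | cnt ω i ≤ a} ∪ ⋃ l ∈ univ.filter fun l => 2 * p l ≤ p i, {ω | a + 1 ≤ cnt ω l} := by
    intro ω hω
    simp only [lightLe, Set.mem_compl_iff, Set.mem_preimage, Set.mem_inter_iff,
      Set.mem_ofPred_eq, not_and_or, not_lt, not_forall] at hω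
    rcases hω with hi | ⟨l, hl, hla⟩
    · exact Or.inl hi
    · exact Or.inr (Set.mem_biUnion (mem_filter.2 ⟨mem_univ l, hl⟩) (by simp; omega))
  have hlight : ∑ l ∈ univ.filter (fun l => 2 * p l ≤ p i), multiPr k h p {ω | a + 1 ≤ cnt ω l}
      ≤ k * ε := by
    refine (sum_le_card_nsmul _ _ ε fun l hl => ?_).trans ?_
    · exact multiPr_le_cnt_le_exp_of_two_mul_le hp hsum (mem_filter.1 hl).2 (by push_cast; linarith)
    · rw [nsmul_eq_mul]
      gcongr
      exact_mod_cast (card_filter_le _ _).trans (card_univ.trans (Fintype.card_fin k)).le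
  have hcompl : multiPr k h p (cnt ⁻¹' ({c | a < c i} ∩ lightLe p i a))ᶜ ≤ (1 + k) * ε := by
    refine (multiPr_mono hp hcover).trans ((multiPr_union_le hp _ _).trans ?_)
    have := multiPr_cnt_le_le_exp hp hsum i ha
    linarith [multiPr_biUnion_le hp (univ.filter fun l => 2 * p l ≤ p i)
      fun l => {ω : Fin h → Fin k | a + 1 ≤ cnt ω l}]
  have hε : ε ≤ ((n : ℝ) ^ 4)⁻¹ := exp_neg_div_le_inv_pow (by omega) hX
  have hn' : (2 : ℝ) ≤ n := by exact_mod_cast hn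
  have hkn' : (k : ℝ) ≤ n := by exact_mod_cast hkn
  have hsmall : (1 + k) * ε ≤ 1 / 4 := by
    calc (1 + k) * ε ≤ (1 + n) * ((n : ℝ) ^ 4)⁻¹ := by gcongr
      _ ≤ 1 / 4 := by
        rw [← div_eq_mul_inv, div_le_iff₀ (by positivity)]
        nlinarith [pow_le_pow_left₀ (by norm_num) hn' 3]
  rw [multiPr_compl hsum] at hcompl
  linarith

lemma leadsHeavy_subset_swap {i j : Fin k} (hpi : 0 < p i) (hj : p i < 2 * p j) (a : ℕ) :
    {c | c ∘ Equiv.swap i j ∈ leadsHeavy p i a j} ⊆ leadsHeavy p i a i := by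
  classical
  rintro c ⟨⟨hcj, hheavy⟩, hlight⟩
  simp only [Function.comp_apply, Equiv.swap_apply_right] at hcj hheavy hlight
  refine ⟨⟨hcj, fun m hm => ?_⟩, fun m hm => ?_⟩
  · have := hheavy (Equiv.swap i j m)
    rw [Equiv.swap_apply_self] at this
    refine this ?_
    rw [Equiv.swap_apply_def]
    split_ifs <;> first | assumption | linarith
  · have hmi : m ≠ i := by rintro rfl; linarith
    have hmj : m ≠ j := by rintro rfl; linarith
    simpa [Equiv.swap_apply_of_ne_of_ne hmi hmj] using hlight m hm

lemma half_mul_multiPr_le_leadsHeavy (hp : ∀ j, 0 ≤ p j) (hsum : ∑ j, p j = 1) {i : Fin k}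
    (hmax : ∀ j, p j ≤ p i) (hpi : 0 < p i) (a : ℕ) :
    p i / 2 * multiPr k h p (cnt ⁻¹' ({c | a < c i} ∩ lightLe p i a))
      ≤ multiPr k h p (cnt ⁻¹' leadsHeavy p i a i) := by
  classical
  set heavy := univ.filter fun l => p i < 2 * p l
  have hi : i ∈ heavy := mem_filter.2 ⟨mem_univ i, by linarith⟩
  have hcover : (cnt ⁻¹' ({c | a < c i} ∩ lightLe p i a) : Set (Fin h → Fin k))
      ⊆ ⋃ j ∈ heavy, cnt ⁻¹' leadsHeavy p i a j := by
    rintro ω ⟨hai, hlight⟩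
    obtain ⟨j, hj, hmaxj⟩ := exists_max_image heavy (cnt ω) ⟨i, hi⟩
    exact Set.mem_biUnion hj
      ⟨⟨hai.trans_le (hmaxj i hi), fun l hl => hmaxj l (mem_filter.2 ⟨mem_univ l, hl⟩)⟩, hlight⟩
  have hswap : ∀ j ∈ heavy, multiPr k h p (cnt ⁻¹' leadsHeavy p i a j)
      ≤ multiPr k h p (cnt ⁻¹' leadsHeavy p i a i) := fun j hj =>
    (multiPr_le_multiPr_swap hp (hmax j) fun c hc => hc.1.2 i (by linarith)).trans
      (multiPr_mono hp (Set.preimage_mono (leadsHeavy_subset_swap hpi (mem_filter.1 hj).2 a)))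
  have hcard : (heavy.card : ℝ) * (p i / 2) ≤ 1 := by
    have := card_nsmul_le_sum heavy p (p i / 2) fun l hl => by linarith [(mem_filter.1 hl).2]
    rw [nsmul_eq_mul] at this
    linarith [sum_le_sum_of_subset_of_nonneg (subset_univ heavy) fun l _ _ => hp l]
  have hL := multiPr_nonneg hp (h := h) (cnt ⁻¹' leadsHeavy p i a i)
  calc p i / 2 * multiPr k h p (cnt ⁻¹' ({c | a < c i} ∩ lightLe p i a))
      ≤ p i / 2 * (heavy.card * multiPr k h p (cnt ⁻¹' leadsHeavy p i a i)) := by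
        gcongr
        refine (multiPr_mono hp hcover).trans ((multiPr_biUnion_le hp _ _).trans ?_)
        simpa using sum_le_card_nsmul _ _ _ hswap
    _ ≤ multiPr k h p (cnt ⁻¹' leadsHeavy p i a i) := by nlinarith

lemma add_single_mem_heavyLe_iff {i : Fin k} (hpi : 0 < p i) (a s : ℕ) (c : Fin k → ℕ) :
    c + Pi.single i 1 ∈ heavyLe p i a s ↔ c ∈ heavyLe p i a s := by
  have hc : ∀ l, l ≠ i → (c + Pi.single i 1 : Fin k → ℕ) l = c l := fun l hl => by simp [hl]
  refine and_congr (forall_congr' fun l => imp_congr_right fun hl => by rw [hc l hl])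
    (forall_congr' fun l => imp_congr_right fun hl => by rw [hc l (by rintro rfl; linarith)])

lemma isLowerSet_heavyLe (p : Fin k → ℝ) (i : Fin k) (a s : ℕ) : IsLowerSet (heavyLe p i a s) :=
  fun _ _ hle hc =>
    ⟨fun l hl hh => (hle l).trans (hc.1 l hl hh), fun l hl => (hle l).trans (hc.2 l hl)⟩

lemma multiPr_leadsHeavy_le (hp : ∀ j, 0 ≤ p j) (hsum : ∑ j, p j = 1) {i : Fin k}
    (hpi : 0 < p i) {a T : ℕ} (hTh : T < h) (hT : (T + 1) * (1 - p i) ≤ 3 * ((h - T) * p i)) :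
    multiPr k h p (cnt ⁻¹' leadsHeavy p i a i)
      ≤ multiPr k h p {ω | T + 1 ≤ cnt ω i} + 3 * multiPr k h p (Wstrict k h i) := by
  have hpi1 := apply_le_one hp hsum i
  have hstep : ∀ s ≤ T, multiPr k h p (cnt ⁻¹' ({c | c i = s} ∩ heavyLe p i a s))
      ≤ 3 * multiPr k h p (cnt ⁻¹' ({c | c i = s + 1} ∩ heavyLe p i a s)) := by
    intro s hs
    have key := sub_mul_multiPr_cnt_eq_le (h := h) hp hsum (add_single_mem_heavyLe_iff hpi a s)
      (isLowerSet_heavyLe p i a s) s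
    rw [Nat.cast_sub (by omega)] at key
    have hsT : (s : ℝ) ≤ T := by exact_mod_cast hs
    have hTh' : (T : ℝ) < h := by exact_mod_cast hTh
    have hpos : 0 < ((h : ℝ) - s) * p i := mul_pos (by linarith) hpi
    have hcoef : (s + 1) * (1 - p i) ≤ 3 * ((h - s) * p i) := by nlinarith
    have hP := multiPr_nonneg hp (h := h) (cnt ⁻¹' ({c | c i = s + 1} ∩ heavyLe p i a s))
    refine le_of_mul_le_mul_left ?_ hpos
    calc ((h : ℝ) - s) * p i * multiPr k h p (cnt ⁻¹' ({c | c i = s} ∩ heavyLe p i a s))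
        ≤ (s + 1) * (1 - p i) * multiPr k h p (cnt ⁻¹' ({c | c i = s + 1} ∩ heavyLe p i a s)) :=
          key
      _ ≤ _ := by nlinarith
  have hcover : (cnt ⁻¹' leadsHeavy p i a i : Set (Fin h → Fin k))
      ⊆ {ω | T + 1 ≤ cnt ω i} ∪ ⋃ s ∈ Ioc a T, cnt ⁻¹' ({c | c i = s} ∩ heavyLe p i a s) := by
    rintro ω ⟨⟨hai, hheavy⟩, hlight⟩
    by_cases hT' : T + 1 ≤ cnt ω i
    · exact Or.inl hT'
    · exact Or.inr (Set.mem_biUnion (mem_Ioc.2 ⟨hai, by omega⟩)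
        ⟨rfl, fun l _ hl => hheavy l hl, hlight⟩)
  have hwin : ⋃ s ∈ Ioc a T, cnt ⁻¹' ({c | c i = s + 1} ∩ heavyLe p i a s) ⊆ Wstrict k h i := by
    intro ω hω
    obtain ⟨s, hs, hωs, hheavy, hlight⟩ := Set.mem_iUnion₂.1 hω
    intro j hj
    rw [show cnt ω i = s + 1 from hωs]
    by_cases hjh : p i < 2 * p j
    · exact Nat.lt_succ_of_le (hheavy j hj hjh)
    · exact Nat.lt_succ_of_le ((hlight j (not_lt.1 hjh)).trans (mem_Ioc.1 hs).1.le)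
  have hdisj : ((Ioc a T : Finset ℕ) : Set ℕ).PairwiseDisjoint
      fun s => (cnt ⁻¹' ({c | c i = s + 1} ∩ heavyLe p i a s) : Set (Fin h → Fin k)) :=
    fun s _ t _ hst => Set.disjoint_left.2 fun ω h1 h2 =>
      hst (Nat.succ_injective ((show cnt ω i = s + 1 from h1.1).symm.trans h2.1))
  calc multiPr k h p (cnt ⁻¹' leadsHeavy p i a i)
      ≤ multiPr k h p {ω | T + 1 ≤ cnt ω i}
          + ∑ s ∈ Ioc a T, multiPr k h p (cnt ⁻¹' ({c | c i = s} ∩ heavyLe p i a s)) :=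
        (multiPr_mono hp hcover).trans ((multiPr_union_le hp _ _).trans
          (add_le_add le_rfl (multiPr_biUnion_le hp _ _)))
    _ ≤ multiPr k h p {ω | T + 1 ≤ cnt ω i}
          + 3 * ∑ s ∈ Ioc a T, multiPr k h p (cnt ⁻¹' ({c | c i = s + 1} ∩ heavyLe p i a s)) := by
        rw [mul_sum]
        gcongr with s hs
        exact hstep s (mem_Ioc.1 hs).2
    _ ≤ multiPr k h p {ω | T + 1 ≤ cnt ω i} + 3 * multiPr k h p (Wstrict k h i) := by
        rw [← multiPr_biUnion _ _ hdisj]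
        gcongr
        exact multiPr_mono hp hwin

lemma one_le_mul_of_forall_le (hp : ∀ j, 0 ≤ p j) (hsum : ∑ j, p j = 1) {i : Fin k}
    (hmax : ∀ j, p j ≤ p i) {n : ℕ} (hkn : k ≤ n) : 1 ≤ (n : ℝ) * p i :=
  calc (1 : ℝ) = ∑ j, p j := hsum.symm
    _ ≤ ∑ _j : Fin k, p i := sum_le_sum fun j _ => hmax j
    _ = k * p i := by simp
    _ ≤ n * p i := by gcongr; exact hp i

lemma multiPr_floor_lt_cnt_le (hp : ∀ j, 0 ≤ p j) (hsum : ∑ j, p j = 1) {i : Fin k}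
    (hmax : ∀ j, p j ≤ p i) {n : ℕ} (hkn : k ≤ n) (hn : 2 ≤ n) (hX : 324 * log n < h * p i) :
    multiPr k h p {ω | ⌊5 / 4 * (h * p i)⌋₊ + 1 ≤ cnt ω i} ≤ p i / 8 := by
  have hpn := one_le_mul_of_forall_le hp hsum hmax hkn
  have hn' : (2 : ℝ) ≤ n := by exact_mod_cast hn
  refine (multiPr_le_cnt_le_exp hp hsum i ?_).trans
    ((exp_neg_div_le_inv_pow (by omega) hX).trans ?_)
  · exact_mod_cast (Nat.lt_floor_add_one _).le
  · rw [inv_le_iff_one_le_mul₀ (by positivity)]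
    nlinarith [pow_le_pow_left₀ (by norm_num) hn' 3]

lemma div_eighteen_le_multiPr_Wstrict (hp : ∀ j, 0 ≤ p j) (hsum : ∑ j, p j = 1) {i : Fin k}
    (hmax : ∀ j, p j ≤ p i) {n : ℕ} (hkn : k ≤ n) (hn : 2 ≤ n) (hX : 324 * log n < h * p i) :
    p i / 18 ≤ multiPr k h p (Wstrict k h i) := by
  set X := (h : ℝ) * p i
  have hlog : log 2 ≤ log n := log_le_log (by norm_num) (by exact_mod_cast hn)
  have hX28 : 28 ≤ X := by linarith [log_two_gt_d9]
  have hpi : 0 < p i := pos_of_mul_pos_right (by linarith : 0 < X) h.cast_nonneg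
  have hh : (0 : ℝ) < h := pos_of_mul_pos_left (by linarith : 0 < X) hpi.le
  set a := ⌊3 / 4 * X⌋₊
  have hgood := three_quarters_le_multiPr_lightLe hp hsum i hkn hn hX (a := a)
    (Nat.floor_le (by positivity)) (Nat.lt_floor_add_one _).le
  rcases lt_or_ge (p i) (2 / 3) with hsmall | hlarge
  · set T := ⌊5 / 4 * X⌋₊
    have hT1 : (T : ℝ) ≤ 5 / 4 * X := Nat.floor_le (by positivity)
    have hTh : T < h := by exact_mod_cast (show (T : ℝ) < h by nlinarith)
    have hT : (T + 1) * (1 - p i) ≤ 3 * ((h - T) * p i) := by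
      have : ((T : ℝ) + 1) * (1 + 2 * p i) ≤ (5 / 4 * X + 1) * (7 / 3) :=
        mul_le_mul (by linarith) (by linarith) (by positivity) (by positivity)
      nlinarith
    have hlead : p i / 2 * (3 / 4) ≤ multiPr k h p (cnt ⁻¹' leadsHeavy p i a i) :=
      (mul_le_mul_of_nonneg_left hgood (by positivity)).trans
        (half_mul_multiPr_le_leadsHeavy hp hsum hmax hpi a)
    linarith [multiPr_leadsHeavy_le hp hsum hpi (a := a) hTh hT,
      multiPr_floor_lt_cnt_le hp hsum hmax hkn hn hX]
  · have hW : (cnt ⁻¹' ({c | a < c i} ∩ lightLe p i a) : Set (Fin h → Fin k))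
        ⊆ Wstrict k h i := by
      rintro ω ⟨hai, hlight⟩ j hj
      have : p j + p i ≤ 1 := hsum ▸ add_le_sum (fun l _ => hp l) (mem_univ j) (mem_univ i) hj
      exact (hlight j (by linarith)).trans_lt hai
    linarith [multiPr_mono hp hW, apply_le_one hp hsum i]

end StrictWin

open StrictWin in
/-- if `p_1 ≥ p_2 ≥ … ≥ p_k`, `k ≤ n` and `h·p_1 > 324·log n`, then
`Pr(W_{1,2,strict}) ≥ (1/36)·(p_1 + p_2)` (for `n` large enough). -/
theorem strict_win_12_prob_lower_bound :
    ∃ n0 : ℕ, ∀ (n k h : ℕ), n0 ≤ n → ∀ (hk : 2 ≤ k), 1 ≤ h → k ≤ n →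
      ∀ p : Fin k → ℝ, (∀ i, 0 ≤ p i) → ∑ i, p i = 1 →
        (∀ i j : Fin k, i ≤ j → p j ≤ p i) →
        324 * Real.log n < (h : ℝ) * p (o₁ k hk) →
        (1 / 36) * (p (o₁ k hk) + p (o₂ k hk)) ≤
          multiPr k h p (W12strict k h (o₁ k hk) (o₂ k hk)) := by
  refine ⟨0, fun n k h _ hk _ hkn p hp hsum hanti hX => ?_⟩
  have hmax : ∀ j, p j ≤ p (o₁ k hk) := fun j => hanti _ j (Nat.zero_le j.val)
  calc (1 / 36) * (p (o₁ k hk) + p (o₂ k hk)) ≤ p (o₁ k hk) / 18 := by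
        linarith [hmax (o₂ k hk)]
    _ ≤ multiPr k h p (Wstrict k h (o₁ k hk)) :=
        div_eighteen_le_multiPr_Wstrict hp hsum hmax hkn (hk.trans hkn) hX
    _ ≤ multiPr k h p (W12strict k h (o₁ k hk) (o₂ k hk)) := multiPr_mono hp Set.subset_union_left
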